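/- Let 𝐗₁ = (X₁; Y₁) and 𝐗₂ = (X₂; Y₂) be frames for Lagrangian subspaces ℓ₁ and ℓ₂ of ℂ^{2n}, and let w̃ ∈ ℂ with |w̃| = 1. Define 𝐗₃ := i(1 − w̃)𝐗₂ − (1 + w̃)J𝐗₂. Then 𝐗₃ is a frame for a Lagrangian subspace ℓ₃ of ℂ^{2n}, and dim ker(W̃ − w̃ I) = dim ker(𝐗₁* J 𝐗₃) = dim(ℓ₁ ∩ ℓ₃). -/

import Mathlib

open Matrix

noncomputable section

def Jmat (n : ℕ) : Matrix (Fin n ⊕ Fin n) (Fin n ⊕ Fin n) ℂ :=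
  Matrix.fromBlocks 0 (-1) 1 0

/-- The `2n × n` matrix with `n × n` blocks `X` (top) and `Y` (bottom). -/
def frame {n : ℕ} (X Y : Matrix (Fin n) (Fin n) ℂ) :
    Matrix (Fin n ⊕ Fin n) (Fin n) ℂ :=
  Matrix.fromRows X Y

/-- A subspace `ℓ ⊆ ℂ^{2n}` is Lagrangian if it has dimension `n` and
`(Ju, v) = 0` for all `u, v ∈ ℓ`. -/
def IsLagrangianSubspace (n : ℕ) (ℓ : Submodule ℂ ((Fin n ⊕ Fin n) → ℂ)) : Prop :=
  Module.finrank ℂ ℓ = n ∧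
    ∀ u ∈ ℓ, ∀ v ∈ ℓ, star ((Jmat n) *ᵥ u) ⬝ᵥ v = 0

/-- The column span of the frame `(X; Y)`. -/
def frameSpan {n : ℕ} (X Y : Matrix (Fin n) (Fin n) ℂ) :
    Submodule ℂ ((Fin n ⊕ Fin n) → ℂ) :=
  Submodule.span ℂ (Set.range (frame X Y)ᵀ)

/-- `(X; Y)` is a frame for a Lagrangian subspace of `ℂ^{2n}`:
its columns span a Lagrangian subspace. -/
def IsLagrangianFrame {n : ℕ} (X Y : Matrix (Fin n) (Fin n) ℂ) : Prop :=
  IsLagrangianSubspace n (frameSpan X Y)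

/-- `W̃ := −(X₁ + iY₁)(X₁ − iY₁)⁻¹(X₂ − iY₂)(X₂ + iY₂)⁻¹`. -/
def tW {n : ℕ} (X₁ Y₁ X₂ Y₂ : Matrix (Fin n) (Fin n) ℂ) : Matrix (Fin n) (Fin n) ℂ :=
  -((X₁ + Complex.I • Y₁) * (X₁ - Complex.I • Y₁)⁻¹ *
    ((X₂ - Complex.I • Y₂) * (X₂ + Complex.I • Y₂)⁻¹))


/-!
A frame `𝐗` spans a Lagrangian subspace iff it has rank `n` and `𝐗ᴴ J 𝐗 = 0`. For `|w| = 1` the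
matrix `M = i(1 - w) - (1 + w) J` is invertible with `Mᴴ J M = 4 J`, so `𝐗₃ = M 𝐗₂` is again a
Lagrangian frame.

With `Aⱼ = Xⱼ + i Yⱼ`, `Bⱼ = Xⱼ - i Yⱼ` one has `A₁ᴴ A₂ = 𝐗₁ᴴ 𝐗₂ - i 𝐗₁ᴴ J 𝐗₂` and
`B₁ᴴ B₂ = 𝐗₁ᴴ 𝐗₂ + i 𝐗₁ᴴ J 𝐗₂`, hence `𝐗₁ᴴ J 𝐗₃ = w A₁ᴴ A₂ + B₁ᴴ B₂`. Since `A₁ᴴ A₁ = B₁ᴴ B₁`,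
this equals `-A₁ᴴ (W̃ - w) A₂` with `A₁, A₂` invertible, so `W̃ - w` and `𝐗₁ᴴ J 𝐗₃` have the same
rank. Finally `ℓ₁ = ker (𝐗₁ᴴ J)` (an isotropic subspace of dimension `n` inside a kernel of
dimension `n`), and the injective map `𝐗₃` carries `ker (𝐗₁ᴴ J 𝐗₃)` onto `ℓ₁ ∩ ℓ₃`.
-/

open LinearMap Module

namespace Matrix

variable {l m n K : Type*} [Fintype n] [Field K]

theorem rank_add_finrank_ker_mulVecLin (A : Matrix m n K) :
    A.rank + finrank K (ker A.mulVecLin) = Fintype.card n := by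
  rw [rank, finrank_range_add_finrank_ker, finrank_fintype_fun_eq_card]

theorem finrank_ker_mulVecLin_eq_of_rank_eq {A : Matrix l n K} {B : Matrix m n K}
    (h : A.rank = B.rank) :
    finrank K (ker A.mulVecLin) = finrank K (ker B.mulVecLin) := by
  have hA := A.rank_add_finrank_ker_mulVecLin
  have hB := B.rank_add_finrank_ker_mulVecLin
  omega

theorem injective_mulVecLin_of_rank_eq {A : Matrix m n K} (h : A.rank = Fintype.card n) :
    Function.Injective A.mulVecLin := by
  have hA := A.rank_add_finrank_ker_mulVecLin
  rw [← ker_eq_bot, ← Submodule.finrank_eq_zero (R := K)]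
  omega

theorem isUnit_of_rank_eq [DecidableEq n] {A : Matrix n n K} (h : A.rank = Fintype.card n) :
    IsUnit A :=
  mulVec_injective_iff_isUnit.mp (injective_mulVecLin_of_rank_eq h)

theorem rank_neg (A : Matrix m n K) : (-A).rank = A.rank := by
  rw [rank, rank, show (-A).mulVecLin = -A.mulVecLin by ext; simp, range_neg]

theorem finrank_ker_mul_eq_finrank_ker_inf_range [Fintype m] (A : Matrix l m K)
    {B : Matrix m n K} (hB : Function.Injective B.mulVecLin) :
    finrank K (ker (A * B).mulVecLin) = finrank K ↥(ker A.mulVecLin ⊓ range B.mulVecLin) := by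
  rw [mulVecLin_mul, ker_comp, (Submodule.equivMapOfInjective _ hB _).finrank_eq,
    Submodule.map_comap_eq, inf_comm]

theorem eq_zero_of_forall_star_dotProduct_mulVec {R : Type*} [Fintype m] [PartialOrder R] [Ring R]
    [StarRing R] [StarOrderedRing R] [NoZeroDivisors R] {M : Matrix m n R}
    (h : ∀ a b, star a ⬝ᵥ (M *ᵥ b) = 0) : M = 0 :=
  ext_iff_mulVec.mpr fun b => by
    simpa only [zero_mulVec, dotProduct_star_self_eq_zero] using h (M *ᵥ b) b

end Matrix

open Complex

section Symplectic

variable {n : ℕ}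

theorem frameSpan_eq_range (X Y : Matrix (Fin n) (Fin n) ℂ) :
    frameSpan X Y = range (frame X Y).mulVecLin :=
  (range_mulVecLin _).symm

theorem Jmat_mul_Jmat : Jmat n * Jmat n = -1 := by
  ext (i | i) (j | j) <;> simp [Jmat, fromBlocks_multiply, one_apply, eq_comm]

theorem conjTranspose_Jmat : (Jmat n)ᴴ = -Jmat n := by
  ext (i | i) (j | j) <;> simp [Jmat, one_apply, eq_comm]

theorem isUnit_Jmat : IsUnit (Jmat n) :=
  .of_mul_eq_one (-Jmat n) (by rw [Matrix.mul_neg, Jmat_mul_Jmat, neg_neg])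

theorem Jmat_mul_frame (X Y : Matrix (Fin n) (Fin n) ℂ) :
    Jmat n * frame X Y = frame (-Y) X := by
  simp [Jmat, frame, fromBlocks_mul_fromRows]

theorem conjTranspose_frame_mul_frame (X Y X' Y' : Matrix (Fin n) (Fin n) ℂ) :
    (frame X Y)ᴴ * frame X' Y' = Xᴴ * X' + Yᴴ * Y' := by
  rw [frame, conjTranspose_fromRows_eq_fromCols_conjTranspose, frame, fromCols_mul_fromRows]

theorem conjTranspose_frame_mul_Jmat_mul_frame (X Y X' Y' : Matrix (Fin n) (Fin n) ℂ) :
    (frame X Y)ᴴ * Jmat n * frame X' Y' = Yᴴ * X' - Xᴴ * Y' := by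
  rw [Matrix.mul_assoc, Jmat_mul_frame, conjTranspose_frame_mul_frame, Matrix.mul_neg,
    neg_add_eq_sub]

theorem conjTranspose_add_I_smul_mul (X Y X' Y' : Matrix (Fin n) (Fin n) ℂ) :
    (X + I • Y)ᴴ * (X' + I • Y') =
      (frame X Y)ᴴ * frame X' Y' - I • ((frame X Y)ᴴ * Jmat n * frame X' Y') := by
  rw [conjTranspose_frame_mul_frame, conjTranspose_frame_mul_Jmat_mul_frame]
  simp only [conjTranspose_add, conjTranspose_smul, star_def, conj_I, Matrix.add_mul,
    Matrix.mul_add, Matrix.smul_mul, Matrix.mul_smul]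
  match_scalars <;> simp

theorem conjTranspose_sub_I_smul_mul (X Y X' Y' : Matrix (Fin n) (Fin n) ℂ) :
    (X - I • Y)ᴴ * (X' - I • Y') =
      (frame X Y)ᴴ * frame X' Y' + I • ((frame X Y)ᴴ * Jmat n * frame X' Y') := by
  rw [conjTranspose_frame_mul_frame, conjTranspose_frame_mul_Jmat_mul_frame]
  simp only [conjTranspose_sub, conjTranspose_smul, star_def, conj_I, Matrix.sub_mul,
    Matrix.mul_sub, Matrix.smul_mul, Matrix.mul_smul]
  match_scalars <;> simp

end Symplectic

section Lagrangian

variable {n : ℕ} {X Y : Matrix (Fin n) (Fin n) ℂ}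

theorem star_Jmat_mulVec_dotProduct_mulVec {m : Type*} [Fintype m]
    (F : Matrix (Fin n ⊕ Fin n) m ℂ) (a b : m → ℂ) :
    star (Jmat n *ᵥ (F *ᵥ a)) ⬝ᵥ (F *ᵥ b) = -(star a ⬝ᵥ ((Fᴴ * Jmat n * F) *ᵥ b)) := by
  rw [mulVec_mulVec, star_mulVec, conjTranspose_mul, conjTranspose_Jmat, ← dotProduct_mulVec,
    ← dotProduct_neg, ← neg_mulVec, mulVec_mulVec, Matrix.mul_neg, Matrix.neg_mul,
    Matrix.mul_assoc]

open scoped ComplexOrder in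
theorem isLagrangianFrame_iff :
    IsLagrangianFrame X Y ↔ (frame X Y).rank = n ∧ (frame X Y)ᴴ * Jmat n * frame X Y = 0 := by
  refine and_congr (by rw [rank_eq_finrank_span_cols]; rfl) ?_
  simp only [frameSpan_eq_range, mem_range, mulVecLin_apply, forall_exists_index,
    forall_apply_eq_imp_iff, star_Jmat_mulVec_dotProduct_mulVec, neg_eq_zero]
  exact ⟨eq_zero_of_forall_star_dotProduct_mulVec, fun h a b => by simp [h]⟩

open scoped ComplexOrder in
theorem IsLagrangianFrame.frameSpan_eq_ker (h : IsLagrangianFrame X Y) :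
    frameSpan X Y = ker ((frame X Y)ᴴ * Jmat n).mulVecLin := by
  obtain ⟨hrank, hiso⟩ := isLagrangianFrame_iff.mp h
  have hle : frameSpan X Y ≤ ker ((frame X Y)ᴴ * Jmat n).mulVecLin := by
    rw [frameSpan_eq_range]
    rintro _ ⟨a, rfl⟩
    rw [mem_ker, mulVecLin_apply, mulVecLin_apply, mulVec_mulVec, hiso, zero_mulVec]
  have hker := ((frame X Y)ᴴ * Jmat n).rank_add_finrank_ker_mulVecLin
  rw [rank_mul_eq_left_of_isUnit_det _ _ ((Matrix.isUnit_iff_isUnit_det _).mp isUnit_Jmat),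
    rank_conjTranspose, hrank, Fintype.card_sum, Fintype.card_fin] at hker
  refine Submodule.eq_of_le_of_finrank_le hle ?_
  rw [h.1]
  omega

end Lagrangian

section Rotation

variable {n : ℕ}

def rotMat (n : ℕ) (w : ℂ) : Matrix (Fin n ⊕ Fin n) (Fin n ⊕ Fin n) ℂ :=
  (I * (1 - w)) • 1 - (1 + w) • Jmat n

theorem rotMat_mul {m : Type*} (w : ℂ) (F : Matrix (Fin n ⊕ Fin n) m ℂ) :
    rotMat n w * F = (I * (1 - w)) • F - (1 + w) • (Jmat n * F) := by
  rw [rotMat, Matrix.sub_mul, Matrix.smul_mul, Matrix.smul_mul, Matrix.one_mul]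

theorem isUnit_rotMat {w : ℂ} (hw : w ≠ 0) : IsUnit (rotMat n w) := by
  refine .of_mul_eq_one ((4 * w)⁻¹ • ((I * (1 - w)) • 1 + (1 + w) • Jmat n)) ?_
  have hsq : (I * (1 - w)) ^ 2 + (1 + w) ^ 2 = 4 * w := by
    linear_combination (1 - w) ^ 2 * I_sq
  simp only [rotMat, Matrix.mul_smul, Matrix.sub_mul, Matrix.mul_add, Matrix.smul_mul,
    Matrix.one_mul, Matrix.mul_one, Jmat_mul_Jmat]
  match_scalars
  · field_simp
    linear_combination hsq
  · ring

theorem conjTranspose_rotMat_mul_Jmat_mul_rotMat {w : ℂ} (hw : ‖w‖ = 1) :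
    (rotMat n w)ᴴ * Jmat n * rotMat n w = (4 : ℂ) • Jmat n := by
  have hconj : starRingEnd ℂ w * w = 1 := by
    rw [conj_mul', hw, ofReal_one, one_pow]
  simp only [rotMat, conjTranspose_sub, conjTranspose_smul, conjTranspose_one, conjTranspose_Jmat,
    Matrix.sub_mul, Matrix.mul_sub, Matrix.smul_mul, Matrix.mul_smul, Matrix.one_mul,
    Matrix.mul_one, Matrix.neg_mul, Jmat_mul_Jmat]
  match_scalars <;> simp only [star_def, map_mul, map_sub, map_add, map_one, conj_I]
  · linear_combination -(1 - w) * (1 - starRingEnd ℂ w) * I_sq + 2 * hconj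
  · linear_combination 2 * I * hconj

theorem IsLagrangianFrame.of_frame_eq_rotMat_mul {X Y X' Y' : Matrix (Fin n) (Fin n) ℂ}
    (h : IsLagrangianFrame X Y) {w : ℂ} (hw : ‖w‖ = 1)
    (h' : frame X' Y' = rotMat n w * frame X Y) : IsLagrangianFrame X' Y' := by
  obtain ⟨hrank, hiso⟩ := isLagrangianFrame_iff.mp h
  have hdet : IsUnit (rotMat n w).det :=
    (Matrix.isUnit_iff_isUnit_det _).mp (isUnit_rotMat (norm_ne_zero_iff.mp (hw ▸ one_ne_zero)))
  refine isLagrangianFrame_iff.mpr ⟨?_, ?_⟩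
  · rw [h', rank_mul_eq_right_of_isUnit_det _ _ hdet, hrank]
  · calc (frame X' Y')ᴴ * Jmat n * frame X' Y'
        = (frame X Y)ᴴ * ((rotMat n w)ᴴ * Jmat n * rotMat n w) * frame X Y := by
          simp only [h', conjTranspose_mul, Matrix.mul_assoc]
      _ = 0 := by
          rw [conjTranspose_rotMat_mul_Jmat_mul_rotMat hw, Matrix.mul_smul, Matrix.smul_mul,
            hiso, smul_zero]

theorem conjTranspose_frame_mul_Jmat_mul_rotMat_mul_frame
    (X₁ Y₁ X₂ Y₂ : Matrix (Fin n) (Fin n) ℂ) (w : ℂ) :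
    (frame X₁ Y₁)ᴴ * Jmat n * (rotMat n w * frame X₂ Y₂) =
      w • ((X₁ + I • Y₁)ᴴ * (X₂ + I • Y₂)) + (X₁ - I • Y₁)ᴴ * (X₂ - I • Y₂) := by
  have hJJ : Jmat n * (Jmat n * frame X₂ Y₂) = -frame X₂ Y₂ := by
    rw [← Matrix.mul_assoc, Jmat_mul_Jmat, Matrix.neg_mul, Matrix.one_mul]
  rw [conjTranspose_add_I_smul_mul, conjTranspose_sub_I_smul_mul, rotMat_mul]
  simp only [Matrix.mul_sub, Matrix.mul_smul, Matrix.mul_assoc, hJJ, Matrix.mul_neg]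
  module

end Rotation

section Cayley

variable {n : ℕ} {X Y X₁ Y₁ X₂ Y₂ : Matrix (Fin n) (Fin n) ℂ}

open scoped ComplexOrder in
theorem IsLagrangianFrame.isUnit_add_I_smul (h : IsLagrangianFrame X Y) : IsUnit (X + I • Y) := by
  obtain ⟨hrank, hiso⟩ := isLagrangianFrame_iff.mp h
  refine isUnit_of_rank_eq ?_
  rw [← rank_conjTranspose_mul_self, conjTranspose_add_I_smul_mul, hiso, smul_zero, sub_zero,
    rank_conjTranspose_mul_self, hrank, Fintype.card_fin]

open scoped ComplexOrder in
theorem IsLagrangianFrame.isUnit_sub_I_smul (h : IsLagrangianFrame X Y) : IsUnit (X - I • Y) := by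
  obtain ⟨hrank, hiso⟩ := isLagrangianFrame_iff.mp h
  refine isUnit_of_rank_eq ?_
  rw [← rank_conjTranspose_mul_self, conjTranspose_sub_I_smul_mul, hiso, smul_zero, add_zero,
    rank_conjTranspose_mul_self, hrank, Fintype.card_fin]

theorem IsLagrangianFrame.conjTranspose_add_I_smul_mul_self (h : IsLagrangianFrame X Y) :
    (X + I • Y)ᴴ * (X + I • Y) = (X - I • Y)ᴴ * (X - I • Y) := by
  rw [conjTranspose_add_I_smul_mul, conjTranspose_sub_I_smul_mul, (isLagrangianFrame_iff.mp h).2,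
    smul_zero, sub_zero, add_zero]

theorem conjTranspose_mul_tW_sub_smul_mul (h₁ : IsLagrangianFrame X₁ Y₁)
    (h₂ : IsLagrangianFrame X₂ Y₂) (w : ℂ) :
    (X₁ + I • Y₁)ᴴ * (tW X₁ Y₁ X₂ Y₂ - w • 1) * (X₂ + I • Y₂) =
      -(w • ((X₁ + I • Y₁)ᴴ * (X₂ + I • Y₂)) + (X₁ - I • Y₁)ᴴ * (X₂ - I • Y₂)) := by
  have hA₂ : (X₂ + I • Y₂)⁻¹ * (X₂ + I • Y₂) = 1 :=
    nonsing_inv_mul _ ((Matrix.isUnit_iff_isUnit_det _).mp h₂.isUnit_add_I_smul)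
  have hB₁ : (X₁ - I • Y₁) * (X₁ - I • Y₁)⁻¹ = 1 :=
    mul_nonsing_inv _ ((Matrix.isUnit_iff_isUnit_det _).mp h₁.isUnit_sub_I_smul)
  rw [tW, Matrix.mul_sub, Matrix.sub_mul, Matrix.mul_neg, Matrix.neg_mul, Matrix.mul_smul,
    Matrix.smul_mul, Matrix.mul_one]
  simp only [← Matrix.mul_assoc, h₁.conjTranspose_add_I_smul_mul_self]
  simp only [Matrix.mul_assoc, hA₂, hB₁, Matrix.mul_one]
  abel

theorem rank_tW_sub_smul (h₁ : IsLagrangianFrame X₁ Y₁) (h₂ : IsLagrangianFrame X₂ Y₂) (w : ℂ) :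
    (tW X₁ Y₁ X₂ Y₂ - w • 1).rank =
      ((frame X₁ Y₁)ᴴ * Jmat n * (rotMat n w * frame X₂ Y₂)).rank := by
  have hA₁ := (Matrix.isUnit_iff_isUnit_det _).mp h₁.isUnit_add_I_smul
  have hA₂ := (Matrix.isUnit_iff_isUnit_det _).mp h₂.isUnit_add_I_smul
  rw [conjTranspose_frame_mul_Jmat_mul_rotMat_mul_frame, ← rank_neg (w • _ + _),
    ← conjTranspose_mul_tW_sub_smul_mul h₁ h₂, rank_mul_eq_left_of_isUnit_det _ _ hA₂,
    rank_mul_eq_right_of_isUnit_det _ _ (by rwa [det_conjTranspose, isUnit_star])]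

end Cayley

theorem IsLagrangianFrame.finrank_ker_eq_finrank_frameSpan_inf
    {n : ℕ} {X₁ Y₁ X₂ Y₂ : Matrix (Fin n) (Fin n) ℂ}
    (h₁ : IsLagrangianFrame X₁ Y₁) (h₂ : IsLagrangianFrame X₂ Y₂) :
    finrank ℂ (ker ((frame X₁ Y₁)ᴴ * Jmat n * frame X₂ Y₂).mulVecLin) =
      finrank ℂ ↥(frameSpan X₁ Y₁ ⊓ frameSpan X₂ Y₂) := by
  have hinj : Function.Injective (frame X₂ Y₂).mulVecLin :=
    injective_mulVecLin_of_rank_eq (by rw [(isLagrangianFrame_iff.mp h₂).1, Fintype.card_fin])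
  rw [finrank_ker_mul_eq_finrank_ker_inf_range _ hinj, ← h₁.frameSpan_eq_ker,
    ← frameSpan_eq_range]

/-- Let `𝐗₁, 𝐗₂` be frames for Lagrangian subspaces `ℓ₁, ℓ₂` of `ℂ^{2n}`
and let `w̃ ∈ ℂ` with `|w̃| = 1`. Define `𝐗₃ := i(1 − w̃)𝐗₂ − (1 + w̃)J𝐗₂`. Then `𝐗₃` is a
frame for a Lagrangian subspace `ℓ₃`, and
`dim ker(W̃ − w̃I) = dim ker(𝐗₁* J 𝐗₃) = dim(ℓ₁ ∩ ℓ₃)`. -/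
theorem rotated_frame_lagrangian {n : ℕ} (X₁ Y₁ X₂ Y₂ X₃ Y₃ : Matrix (Fin n) (Fin n) ℂ)
    (h₁ : IsLagrangianFrame X₁ Y₁) (h₂ : IsLagrangianFrame X₂ Y₂)
    (w : ℂ) (hw : ‖w‖ = 1)
    (h₃ : frame X₃ Y₃ =
      (Complex.I * (1 - w)) • frame X₂ Y₂ - (1 + w) • (Jmat n * frame X₂ Y₂)) :
    IsLagrangianFrame X₃ Y₃ ∧
    Module.finrank ℂ (LinearMap.ker (tW X₁ Y₁ X₂ Y₂ - w • 1).mulVecLin) =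
      Module.finrank ℂ (LinearMap.ker ((frame X₁ Y₁)ᴴ * Jmat n * frame X₃ Y₃).mulVecLin) ∧
    Module.finrank ℂ (LinearMap.ker ((frame X₁ Y₁)ᴴ * Jmat n * frame X₃ Y₃).mulVecLin) =
      Module.finrank ℂ (frameSpan X₁ Y₁ ⊓ frameSpan X₃ Y₃ : Submodule ℂ ((Fin n ⊕ Fin n) → ℂ)) := by
  rw [← rotMat_mul] at h₃
  have hlag₃ : IsLagrangianFrame X₃ Y₃ := h₂.of_frame_eq_rotMat_mul hw h₃
  refine ⟨hlag₃, finrank_ker_mulVecLin_eq_of_rank_eq ?_,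
    h₁.finrank_ker_eq_finrank_frameSpan_inf hlag₃⟩
  rw [h₃, rank_tW_sub_smul h₁ h₂]
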